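/- Let E = E(n,𝒟) be a fractal cube, U = ⋃_{j∈J} φ_j([0,1]^d) an island of E₁ (J ⊆ {1,…,N}), and x ∈ E a point with a coding σ = (σ_i) in which letters of J occur infinitely often. Then x is a trivial point of E. -/

import Mathlib

open Set

/-- The unit cube `[0,1]^d`. -/
def unitCube (d : ℕ) : Set (Fin d → ℝ) := {x | ∀ j, x j ∈ Icc (0:ℝ) 1}

/-! If `σ_k ∈ J`, then `x` lies in `Φ(U)` with `Φ = φ_{σ_0} ∘ ⋯ ∘ φ_{σ_{k-1}}`, a homothety of
ratio `n⁻ᵏ` onto a cube of the level-`k` grid. Since `E` lies in `[0,1]^d`, the level-`k` pieces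
of `E` sit in grid cubes with disjoint interiors; as `U` is relatively open in `E₁` and lies in
the open unit cube, `Φ(U) ∩ E` is therefore clopen in `E`. So the component of `x` has diameter
at most `n⁻ᵏ` for infinitely many `k`. -/

open Filter NNReal

theorem IsCompact.subset_of_subset_iUnion_image_of_lipschitzWith {X ι : Type*} [MetricSpace X]
    {E : Set X} (hE : IsCompact E) {f : ι → X → X} (hEf : E ⊆ ⋃ j, f j '' E) {K : ℝ≥0}
    (hK : K < 1) (hf : ∀ j, LipschitzWith K (f j)) {C : Set X} (hC : IsCompact C)
    (hCne : C.Nonempty) (hfC : ∀ j, MapsTo (f j) C C) : E ⊆ C := by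
  rcases E.eq_empty_or_nonempty with rfl | hEne
  · exact empty_subset C
  obtain ⟨y₀, hy₀, hmax⟩ :=
    hE.exists_isMaxOn hEne (Metric.continuous_infDist_pt C).continuousOn
  -- the point of `E` farthest from `C` is the image of a point that is at least as far
  have hcontract : Metric.infDist y₀ C ≤ K * Metric.infDist y₀ C := by
    obtain ⟨j, z, hz, rfl⟩ : ∃ j, ∃ z ∈ E, f j z = y₀ := by simpa using hEf hy₀
    obtain ⟨c, hc, hzc⟩ := hC.exists_infDist_eq_dist hCne z
    calc Metric.infDist (f j z) C ≤ dist (f j z) (f j c) :=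
          Metric.infDist_le_dist_of_mem (hfC j hc)
      _ ≤ K * dist z c := (hf j).dist_le_mul z c
      _ = K * Metric.infDist z C := by rw [hzc]
      _ ≤ K * Metric.infDist (f j z) C := by gcongr; exact hmax hz
  have hzero : Metric.infDist y₀ C = 0 := by
    have hK' : (K : ℝ) < 1 := hK
    nlinarith [Metric.infDist_nonneg (x := y₀) (s := C)]
  intro y hy
  rw [← hC.isClosed.closure_eq, Metric.mem_closure_iff_infDist_zero hCne]
  exact le_antisymm (hzero ▸ hmax hy) Metric.infDist_nonneg

theorem exists_isOpen_inter_iUnion_eq_connectedComponentIn {X ι : Type*} [TopologicalSpace X]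
    [Finite ι] {P : ι → Set X} (hP : ∀ j, IsClosed (P j)) (hPc : ∀ j, IsPreconnected (P j))
    (y : X) : ∃ O, IsOpen O ∧ O ∩ ⋃ j, P j = connectedComponentIn (⋃ j, P j) y := by
  set C := connectedComponentIn (⋃ j, P j) y
  have hmeet : ∀ j, (P j ∩ C).Nonempty → P j ⊆ C := by
    rintro j ⟨z, hzj, hzC⟩
    rw [show C = _ from connectedComponentIn_eq hzC]
    exact (hPc j).subset_connectedComponentIn hzj (subset_iUnion P j)
  refine ⟨(⋃ j ∈ {j | ¬ P j ⊆ C}, P j)ᶜ,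
    (Set.toFinite _).isClosed_biUnion (fun j _ => hP j) |>.isOpen_compl, ?_⟩
  apply Subset.antisymm
  · rintro z ⟨hzO, hz⟩
    obtain ⟨j, hzj⟩ := mem_iUnion.1 hz
    by_contra hzC
    exact hzO (mem_iUnion₂.2 ⟨j, fun hj => hzC (hj hzj), hzj⟩)
  · intro z hzC
    refine ⟨fun hz => ?_, connectedComponentIn_subset _ _ hzC⟩
    obtain ⟨j, hj, hzj⟩ := mem_iUnion₂.1 hz
    exact hj (hmeet j ⟨z, hzj, hzC⟩)

theorem connectedComponentIn_subset_of_isOpen_inter_eq {X : Type*} [TopologicalSpace X]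
    {E F V : Set X} {x : X} (hF : IsClosed F) (hV : IsOpen V) (hVF : V ∩ E = F ∩ E)
    (hx : x ∈ F) : connectedComponentIn E x ⊆ F := by
  by_cases hxE : x ∈ E
  swap
  · rw [connectedComponentIn_eq_empty hxE]; exact empty_subset F
  have hcover : connectedComponentIn E x ⊆ V ∪ Fᶜ := fun z hz => by
    by_cases hzF : z ∈ F
    · exact Or.inl (hVF ▸ ⟨hzF, connectedComponentIn_subset _ _ hz⟩ : z ∈ V ∩ E).1
    · exact Or.inr hzF
  have hsep : connectedComponentIn E x ∩ (V ∩ Fᶜ) = ∅ := by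
    refine eq_empty_of_forall_notMem fun z ⟨hz, hzV, hzF⟩ => hzF ?_
    exact (hVF ▸ ⟨hzV, connectedComponentIn_subset _ _ hz⟩ : z ∈ F ∩ E).1
  rcases isPreconnected_iff_subset_of_disjoint.1 isPreconnected_connectedComponentIn V Fᶜ hV
    hF.isOpen_compl hcover hsep with hsub | hsub
  · exact fun z hz => (hVF ▸ ⟨hsub hz, connectedComponentIn_subset _ _ hz⟩ : z ∈ F ∩ E).1
  · exact absurd hx (hsub (mem_connectedComponentIn hxE))

theorem eq_of_frequently_dist_le_pow {X : Type*} [MetricSpace X] {x y : X} {r : ℝ}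
    (hr₀ : 0 ≤ r) (hr₁ : r < 1) (h : ∃ᶠ k in atTop, dist y x ≤ r ^ k) : y = x :=
  dist_le_zero.1 <| ge_of_tendsto_of_frequently (tendsto_pow_atTop_nhds_zero_of_lt_one hr₀ hr₁) h

section wordMap

variable {X ι : Type*} (φ : ι → X → X)

/-- `wordMap φ [j₁, …, jₖ] = φ j₁ ∘ ⋯ ∘ φ jₖ`, the paper's `φ_{j₁…jₖ}`. -/
def wordMap (w : List ι) : X → X :=
  w.foldr (fun j f => φ j ∘ f) id

@[simp]
theorem wordMap_nil : wordMap φ [] = id := rfl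

@[simp]
theorem wordMap_cons (j : ι) (w : List ι) : wordMap φ (j :: w) = φ j ∘ wordMap φ w := rfl

theorem wordMap_append (u v : List ι) : wordMap φ (u ++ v) = wordMap φ u ∘ wordMap φ v := by
  induction u with
  | nil => rfl
  | cons j u ih => rw [List.cons_append, wordMap_cons, wordMap_cons, ih, Function.comp_assoc]

theorem wordMap_ofFn_succ (σ : ℕ → ι) (k : ℕ) :
    wordMap φ (List.ofFn fun i : Fin (k + 1) => σ i) =
      wordMap φ (List.ofFn fun i : Fin k => σ i) ∘ φ (σ k) := by
  rw [List.ofFn_succ', List.concat_eq_append, wordMap_append]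
  rfl

variable {φ}

theorem mem_wordMap_ofFn_image_of_mem_succ {σ : ℕ → ι} {k : ℕ} {E U : Set X} {x : X}
    (hEU : φ (σ k) '' E ⊆ U) (hx : x ∈ wordMap φ (List.ofFn fun i : Fin (k + 1) => σ i) '' E) :
    x ∈ wordMap φ (List.ofFn fun i : Fin k => σ i) '' U := by
  rw [wordMap_ofFn_succ, image_comp] at hx
  exact image_mono hEU hx

theorem exists_wordMap_of_subset_iUnion_image {E : Set X} (hE : E ⊆ ⋃ j, φ j '' E) (k : ℕ) :
    ∀ y ∈ E, ∃ w : List ι, w.length = k ∧ y ∈ wordMap φ w '' E := by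
  induction k with
  | zero => exact fun y hy => ⟨[], rfl, y, hy, rfl⟩
  | succ k ih =>
    intro y hy
    obtain ⟨j, z, hz, rfl⟩ : ∃ j, ∃ z ∈ E, φ j z = y := by simpa using hE hy
    obtain ⟨w, hw, u, hu, rfl⟩ := ih z hz
    exact ⟨j :: w, by simp [hw], u, hu, rfl⟩

end wordMap

section unitCube

variable {d : ℕ}

theorem unitCube_eq_pi : unitCube d = univ.pi fun _ => Icc (0 : ℝ) 1 := by
  ext z; exact ⟨fun h i _ => h i, fun h i => h i (mem_univ i)⟩

theorem isCompact_unitCube : IsCompact (unitCube d) :=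
  unitCube_eq_pi ▸ isCompact_univ_pi fun _ => isCompact_Icc

theorem isPreconnected_unitCube : IsPreconnected (unitCube d) :=
  unitCube_eq_pi ▸ (convex_pi fun _ _ => convex_Icc (0 : ℝ) 1).isPreconnected

theorem unitCube_nonempty : (unitCube d).Nonempty :=
  ⟨0, fun _ => ⟨le_rfl, zero_le_one⟩⟩

theorem interior_unitCube : interior (unitCube d) = univ.pi fun _ => Ioo (0 : ℝ) 1 := by
  rw [unitCube_eq_pi, interior_pi_set finite_univ]
  simp only [interior_Icc]

theorem dist_le_one_of_mem_unitCube {z z' : Fin d → ℝ} (hz : z ∈ unitCube d)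
    (hz' : z' ∈ unitCube d) : dist z z' ≤ 1 := by
  refine (dist_pi_le_iff zero_le_one).2 fun i => ?_
  rw [Real.dist_eq, abs_sub_le_iff]
  constructor <;> linarith [(hz i).1, (hz i).2, (hz' i).1, (hz' i).2]

theorem mapsTo_inv_smul_add_unitCube {n : ℕ} {b : Fin d → ℝ} (hb : ∀ i, ∃ m : ℕ, m < n ∧ b i = m) :
    MapsTo (fun z => (n : ℝ)⁻¹ • (z + b)) (unitCube d) (unitCube d) := by
  intro z hz i
  obtain ⟨m, hm, hbi⟩ := hb i
  have hmn : (m : ℝ) + 1 ≤ n := by exact_mod_cast hm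
  have hn : (0 : ℝ) < n := by linarith [(Nat.cast_nonneg m : (0 : ℝ) ≤ m)]
  simp only [Pi.smul_apply, Pi.add_apply, smul_eq_mul, hbi, mem_Icc]
  rw [← div_eq_inv_mul, div_le_one hn]
  constructor <;> [exact div_nonneg (by linarith [(hz i).1]) hn.le; linarith [(hz i).2]]

theorem lipschitzWith_inv_smul_add (n : ℕ) (b : Fin d → ℝ) :
    LipschitzWith (n : ℝ≥0)⁻¹ fun z : Fin d → ℝ => (n : ℝ)⁻¹ • (z + b) :=
  LipschitzWith.of_dist_le_mul fun z z' => by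
    rw [dist_smul₀, dist_add_right, Real.norm_eq_abs, abs_of_nonneg (by positivity)]
    push_cast; rfl

theorem eq_of_add_intCast_eq_add_intCast {z z' : Fin d → ℝ} (hz : z ∈ unitCube d)
    (hz' : z' ∈ interior (unitCube d)) {a a' : Fin d → ℤ}
    (h : z + (fun i => (a i : ℝ)) = z' + fun i => (a' i : ℝ)) : z = z' := by
  rw [interior_unitCube] at hz'
  suffices a = a' by subst this; exact add_right_cancel h
  funext i
  have hi : z i + a i = z' i + a' i := congrFun h i
  have h' := hz' i (mem_univ i)
  have hlt : |a i - a' i| < 1 := by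
    rw [← Int.cast_lt (R := ℝ), Int.cast_abs, Int.cast_sub, Int.cast_one, abs_lt]
    constructor <;> linarith [(hz i).1, (hz i).2, h'.1, h'.2]
  exact sub_eq_zero.1 (Int.abs_lt_one_iff.1 hlt)

end unitCube

section grid

variable {d : ℕ} {ι : Type*} {n : ℕ} {D : ι → Fin d → ℝ} {φ : ι → (Fin d → ℝ) → (Fin d → ℝ)}

theorem exists_wordMap_eq_smul_add_intCast (hn : n ≠ 0) (hD : ∀ j i, ∃ m : ℤ, D j i = m)
    (hφ : ∀ j z, φ j z = (n : ℝ)⁻¹ • (z + D j)) (w : List ι) :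
    ∃ a : Fin d → ℤ, ∀ z, wordMap φ w z = ((n : ℝ)⁻¹ ^ w.length) • (z + fun i => (a i : ℝ)) := by
  induction w with
  | nil => exact ⟨0, fun z => by ext; simp⟩
  | cons j w ih =>
    obtain ⟨a, ha⟩ := ih
    choose m hm using hD j
    refine ⟨a + (n : ℤ) ^ w.length • m, fun z => ?_⟩
    rw [wordMap_cons, Function.comp_apply, ha, hφ]
    ext i
    simp only [Pi.smul_apply, Pi.add_apply, smul_eq_mul, hm, List.length_cons, Int.cast_add,
      Int.cast_mul, Int.cast_pow, Int.cast_natCast]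
    have hpow : (n : ℝ)⁻¹ ^ w.length * (n : ℝ) ^ w.length = 1 := by
      rw [← mul_pow, inv_mul_cancel₀ (Nat.cast_ne_zero.2 hn), one_pow]
    linear_combination (-(n : ℝ)⁻¹ * m i) * hpow

theorem continuous_wordMap (hn : n ≠ 0) (hD : ∀ j i, ∃ m : ℤ, D j i = m)
    (hφ : ∀ j z, φ j z = (n : ℝ)⁻¹ • (z + D j)) (w : List ι) : Continuous (wordMap φ w) := by
  obtain ⟨a, ha⟩ := exists_wordMap_eq_smul_add_intCast hn hD hφ w
  rw [funext ha]
  fun_prop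

theorem isOpenMap_wordMap (hn : n ≠ 0) (hD : ∀ j i, ∃ m : ℤ, D j i = m)
    (hφ : ∀ j z, φ j z = (n : ℝ)⁻¹ • (z + D j)) (w : List ι) : IsOpenMap (wordMap φ w) := by
  obtain ⟨a, ha⟩ := exists_wordMap_eq_smul_add_intCast hn hD hφ w
  rw [funext ha]
  exact (isOpenMap_smul₀ (by positivity)).comp (isOpenMap_add_right _)

theorem dist_le_of_mem_wordMap_image_unitCube (hn : n ≠ 0) (hD : ∀ j i, ∃ m : ℤ, D j i = m)
    (hφ : ∀ j z, φ j z = (n : ℝ)⁻¹ • (z + D j)) {w : List ι} {y y' : Fin d → ℝ}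
    (hy : y ∈ wordMap φ w '' unitCube d) (hy' : y' ∈ wordMap φ w '' unitCube d) :
    dist y y' ≤ (n : ℝ)⁻¹ ^ w.length := by
  obtain ⟨a, ha⟩ := exists_wordMap_eq_smul_add_intCast hn hD hφ w
  obtain ⟨⟨z, hz, rfl⟩, ⟨z', hz', rfl⟩⟩ := And.intro hy hy'
  rw [ha, ha, dist_smul₀, dist_add_right, Real.norm_eq_abs, abs_of_nonneg (by positivity)]
  exact mul_le_of_le_one_right (by positivity) (dist_le_one_of_mem_unitCube hz hz')

theorem eq_of_wordMap_eq_wordMap (hn : n ≠ 0) (hD : ∀ j i, ∃ m : ℤ, D j i = m)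
    (hφ : ∀ j z, φ j z = (n : ℝ)⁻¹ • (z + D j)) {v w : List ι} (hvw : v.length = w.length)
    {z z' : Fin d → ℝ} (hz : z ∈ unitCube d) (hz' : z' ∈ interior (unitCube d))
    (h : wordMap φ v z = wordMap φ w z') : z = z' := by
  obtain ⟨a, ha⟩ := exists_wordMap_eq_smul_add_intCast hn hD hφ v
  obtain ⟨a', ha'⟩ := exists_wordMap_eq_smul_add_intCast hn hD hφ w
  rw [ha, ha', hvw] at h
  exact eq_of_add_intCast_eq_add_intCast hz hz' (smul_right_injective _ (by positivity) h)

theorem mapsTo_unitCube (hD : ∀ j i, ∃ m : ℕ, m < n ∧ D j i = m)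
    (hφ : ∀ j z, φ j z = (n : ℝ)⁻¹ • (z + D j)) (j : ι) :
    MapsTo (φ j) (unitCube d) (unitCube d) :=
  funext (hφ j) ▸ mapsTo_inv_smul_add_unitCube (hD j)

theorem subset_unitCube_of_subset_iUnion_image (hn : 2 ≤ n)
    (hD : ∀ j i, ∃ m : ℕ, m < n ∧ D j i = m) (hφ : ∀ j z, φ j z = (n : ℝ)⁻¹ • (z + D j))
    {E : Set (Fin d → ℝ)} (hEc : IsCompact E) (hE : E ⊆ ⋃ j, φ j '' E) : E ⊆ unitCube d :=
  hEc.subset_of_subset_iUnion_image_of_lipschitzWith hE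
    (inv_lt_one_of_one_lt₀ (by exact_mod_cast hn : (1 : ℝ≥0) < n))
    (fun j => funext (hφ j) ▸ lipschitzWith_inv_smul_add n (D j))
    isCompact_unitCube unitCube_nonempty (mapsTo_unitCube hD hφ)

end grid

theorem connectedComponentIn_subset_wordMap_image {d : ℕ} {ι : Type*} {n : ℕ} (hn : n ≠ 0)
    {D : ι → Fin d → ℝ} (hD : ∀ j i, ∃ m : ℤ, D j i = m) {φ : ι → (Fin d → ℝ) → (Fin d → ℝ)}
    (hφ : ∀ j z, φ j z = (n : ℝ)⁻¹ • (z + D j)) {E : Set (Fin d → ℝ)} (hE : E ⊆ ⋃ j, φ j '' E)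
    (hEcube : E ⊆ unitCube d) {O U : Set (Fin d → ℝ)} (hO : IsOpen O)
    (hOU : O ∩ ⋃ j, φ j '' unitCube d = U) (hUint : U ⊆ interior (unitCube d))
    (hUc : IsCompact U) {w : List ι} {x : Fin d → ℝ} (hx : x ∈ wordMap φ w '' U) :
    connectedComponentIn E x ⊆ wordMap φ w '' U := by
  refine connectedComponentIn_subset_of_isOpen_inter_eq
    (hUc.image (continuous_wordMap hn hD hφ w)).isClosed
    (isOpenMap_wordMap hn hD hφ w _ (hO.inter (isOpen_interior (s := unitCube d)))) ?_ hx
  have hEE₁ : E ⊆ ⋃ j, φ j '' unitCube d := hE.trans (iUnion_mono fun j => image_mono hEcube)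
  ext z
  constructor
  · rintro ⟨⟨u, ⟨huO, huint⟩, rfl⟩, hzE⟩
    -- `z` lies in a piece of the same level, which can only be the piece of `w`
    obtain ⟨v, hv, u', hu', hu'z⟩ := exists_wordMap_of_subset_iUnion_image hE w.length _ hzE
    obtain rfl := eq_of_wordMap_eq_wordMap hn hD hφ hv (hEcube hu') huint hu'z
    exact ⟨⟨u', hOU ▸ ⟨huO, hEE₁ hu'⟩, rfl⟩, hzE⟩
  · rintro ⟨⟨u, hu, rfl⟩, hzE⟩
    exact ⟨⟨u, ⟨(hOU.symm ▸ hu : u ∈ O ∩ _).1, hUint hu⟩, rfl⟩, hzE⟩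

theorem trivial_point_of_island_coding_general
    (d n N : ℕ) (hn : 2 ≤ n)
    (D : Fin N → (Fin d → ℝ))
    (hD : ∀ j i, ∃ m : ℕ, m < n ∧ D j i = (m : ℝ))
    (φ : Fin N → (Fin d → ℝ) → (Fin d → ℝ))
    (hφ : ∀ j x, φ j x = (n : ℝ)⁻¹ • (x + D j))
    (E : Set (Fin d → ℝ)) (hEc : IsCompact E)
    (hE : E = ⋃ j, φ j '' E)
    -- `U = ⋃_{j ∈ J} φ_j([0,1]^d)` is an island of the first approximation `E₁`
    (J : Finset (Fin N)) (U : Set (Fin d → ℝ))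
    (hU : U = ⋃ j ∈ J, φ j '' unitCube d)
    (hUcomp : ∃ y ∈ (⋃ j, φ j '' unitCube d),
      U = connectedComponentIn (⋃ j, φ j '' unitCube d) y)
    (hUisland : U ∩ frontier (unitCube d) = ∅)
    -- `x ∈ E` has a coding in which letters of `J` occur infinitely often
    (x : Fin d → ℝ) (hx : x ∈ E) (σ : ℕ → Fin N)
    (hcoding : (⋂ k : ℕ, ((List.ofFn (fun i : Fin k => σ i)).foldr
        (fun j f => φ j ∘ f) id) '' E) = {x})
    (hinf : ∀ m : ℕ, ∃ k ≥ m, σ k ∈ J) :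
    connectedComponentIn E x = {x} := by
  have hn₀ : n ≠ 0 := by omega
  have hDint : ∀ j i, ∃ m : ℤ, D j i = m := fun j i =>
    let ⟨m, _, hm⟩ := hD j i; ⟨m, by rw [hm, Int.cast_natCast]⟩
  have hcont : ∀ w, Continuous (wordMap φ w) := continuous_wordMap hn₀ hDint hφ
  have hEcube : E ⊆ unitCube d := subset_unitCube_of_subset_iUnion_image hn hD hφ hEc hE.subset
  have hUcube : U ⊆ unitCube d :=
    hU ▸ iUnion₂_subset fun j _ => (mapsTo_unitCube hD hφ j).image_subset
  have hUint : U ⊆ interior (unitCube d) := fun z hz =>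
    self_sdiff_frontier (unitCube d) ▸ ⟨hUcube hz, fun hzf => hUisland.subset ⟨hz, hzf⟩⟩
  obtain ⟨y, -, hUy⟩ := hUcomp
  obtain ⟨O, hO, hOU⟩ := exists_isOpen_inter_iUnion_eq_connectedComponentIn
    (fun j => (isCompact_unitCube.image (hcont [j])).isClosed)
    (fun j => isPreconnected_unitCube.image _ (hcont [j]).continuousOn) y
  have hUc : IsCompact U :=
    hU ▸ J.finite_toSet.isCompact_biUnion fun j _ => isCompact_unitCube.image (hcont [j])
  have hxU (k : ℕ) (hk : σ k ∈ J) : x ∈ wordMap φ (List.ofFn fun i : Fin k => σ i) '' U :=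
    mem_wordMap_ofFn_image_of_mem_succ
      (hU ▸ fun _ hz => mem_iUnion₂.2 ⟨σ k, hk, image_mono hEcube hz⟩)
      (mem_iInter.1 (hcoding.symm ▸ mem_singleton x) (k + 1))
  refine eq_singleton_iff_unique_mem.2 ⟨mem_connectedComponentIn hx, fun z hz => ?_⟩
  refine eq_of_frequently_dist_le_pow (inv_nonneg.2 n.cast_nonneg)
    (inv_lt_one_of_one_lt₀ (by exact_mod_cast hn)) ?_
  refine frequently_atTop.2 fun m => (hinf m).imp fun k ⟨hkm, hk⟩ => ⟨hkm, ?_⟩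
  have hsub := connectedComponentIn_subset_wordMap_image hn₀ hDint hφ hE.subset hEcube hO
    (hOU.trans hUy.symm) hUint hUc (hxU k hk)
  simpa using dist_le_of_mem_wordMap_image_unitCube hn₀ hDint hφ
    (image_mono hUcube (hsub hz)) (image_mono hUcube (hxU k hk))

theorem trivial_point_of_island_coding
    (d n N : ℕ) (hn : 2 ≤ n)
    (D : Fin N → (Fin d → ℝ))
    (hD : ∀ j i, ∃ m : ℕ, m < n ∧ D j i = (m : ℝ))
    (φ : Fin N → (Fin d → ℝ) → (Fin d → ℝ))
    (hφ : ∀ j x, φ j x = (n : ℝ)⁻¹ • (x + D j))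
    (E : Set (Fin d → ℝ)) (hEne : E.Nonempty) (hEc : IsCompact E)
    (hE : E = ⋃ j, φ j '' E)
    -- `U = ⋃_{j ∈ J} φ_j([0,1]^d)` is an island of the first approximation `E₁`
    (J : Finset (Fin N)) (U : Set (Fin d → ℝ))
    (hU : U = ⋃ j ∈ J, φ j '' unitCube d)
    (hUcomp : ∃ y ∈ (⋃ j, φ j '' unitCube d),
      U = connectedComponentIn (⋃ j, φ j '' unitCube d) y)
    (hUisland : U ∩ frontier (unitCube d) = ∅)
    -- `x ∈ E` has a coding in which letters of `J` occur infinitely often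
    (x : Fin d → ℝ) (hx : x ∈ E) (σ : ℕ → Fin N)
    (hcoding : (⋂ k : ℕ, ((List.ofFn (fun i : Fin k => σ i)).foldr
        (fun j f => φ j ∘ f) id) '' E) = {x})
    (hinf : ∀ m : ℕ, ∃ k ≥ m, σ k ∈ J) :
    connectedComponentIn E x = {x} :=
  trivial_point_of_island_coding_general d n N hn D hD φ hφ E hEc hE J U hU hUcomp hUisland x hx σ
    hcoding hinf
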